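/- arXiv:1902.11279 — 3 statements merged into one kernel-verified Lean document; each statement's English description precedes it below -/
import Mathlib

section
/- Let X be a type with decidable equality, let k ≥ 2 be a natural number, let A be a finite subset of X with |A| = k, let a and a' be two distinct elements of A, and let b be an element of X with b ∉ A. Set B = (A \ {a}) ∪ {b} and C = (A \ {a'}) ∪ {b}. Then every finite subset D of X with |D| = k satisfying |D ∩ A| = |D ∩ B| = |D ∩ C| = k − 1 is contained in A ∪ {b}. -/
theorem stmt_0 {X : Type*} [DecidableEq X] (k : ℕ) (hk : 2 ≤ k)
    (A : Finset X) (hA : A.card = k)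
    (a a' : X) (ha : a ∈ A) (ha' : a' ∈ A) (haa' : a ≠ a')
    (b : X) (hb : b ∉ A)
    (B C : Finset X) (hB : B = (A \ {a}) ∪ {b}) (hC : C = (A \ {a'}) ∪ {b})
    (D : Finset X) (hD : D.card = k)
    (hDA : (D ∩ A).card = k - 1) (hDB : (D ∩ B).card = k - 1)
    (hDC : (D ∩ C).card = k - 1) :
    D ⊆ A ∪ {b} := by
  have hbD : b ∈ D := by
    by_contra hbD
    have hBeq : D ∩ B = (D ∩ A) \ {a} := by
      subst hB; ext x
      simp only [Finset.mem_inter, Finset.mem_union, Finset.mem_sdiff,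
        Finset.mem_singleton]
      constructor
      · rintro ⟨hxD, (⟨hxA, hxa⟩ | rfl)⟩
        · exact ⟨⟨hxD, hxA⟩, hxa⟩
        · exact absurd hxD hbD
      · rintro ⟨⟨hxD, hxA⟩, hxa⟩; exact ⟨hxD, Or.inl ⟨hxA, hxa⟩⟩
    have hCeq : D ∩ C = (D ∩ A) \ {a'} := by
      subst hC; ext x
      simp only [Finset.mem_inter, Finset.mem_union, Finset.mem_sdiff,
        Finset.mem_singleton]
      constructor
      · rintro ⟨hxD, (⟨hxA, hxa⟩ | rfl)⟩
        · exact ⟨⟨hxD, hxA⟩, hxa⟩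
        · exact absurd hxD hbD
      · rintro ⟨⟨hxD, hxA⟩, hxa⟩; exact ⟨hxD, Or.inl ⟨hxA, hxa⟩⟩
    have haD : a ∉ D ∩ A := by
      intro haDA
      have : ((D ∩ A) \ {a}).card = (D ∩ A).card - 1 := by
        rw [Finset.sdiff_singleton_eq_erase, Finset.card_erase_of_mem haDA]
      rw [hBeq, this, hDA] at hDB
      omega
    have ha'D : a' ∉ D ∩ A := by
      intro haDA
      have : ((D ∩ A) \ {a'}).card = (D ∩ A).card - 1 := by
        rw [Finset.sdiff_singleton_eq_erase, Finset.card_erase_of_mem haDA]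
      rw [hCeq, this, hDA] at hDC
      omega
    have hsub : D ∩ A ⊆ (A.erase a).erase a' := by
      intro x hx
      rcases Finset.mem_inter.mp hx with ⟨hxD, hxA⟩
      refine Finset.mem_erase.mpr ⟨?_, Finset.mem_erase.mpr ⟨?_, hxA⟩⟩
      · rintro rfl; exact ha'D hx
      · rintro rfl; exact haD hx
    have hcard := Finset.card_le_card hsub
    have h1 : (A.erase a).card = k - 1 := by rw [Finset.card_erase_of_mem ha, hA]
    have h2 : ((A.erase a).erase a').card = k - 2 := by
      rw [Finset.card_erase_of_mem (Finset.mem_erase.mpr ⟨haa'.symm, ha'⟩), h1]; omega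
    rw [hDA, h2] at hcard
    omega
  have hDAcard : (D \ A).card = 1 := by
    have := Finset.card_sdiff_add_card_inter D A
    omega
  have hDAeq : D \ A = {b} := by
    rcases Finset.card_eq_one.mp hDAcard with ⟨x, hx⟩
    have : b ∈ D \ A := Finset.mem_sdiff.mpr ⟨hbD, hb⟩
    rw [hx] at this ⊢
    rw [Finset.mem_singleton.mp this]
  intro d hd
  by_cases hdA : d ∈ A
  · exact Finset.mem_union_left _ hdA
  · have : d ∈ D \ A := Finset.mem_sdiff.mpr ⟨hd, hdA⟩
    rw [hDAeq] at this
    exact Finset.mem_union_right _ this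
end

section
/- Let X be a type with decidable equality, let k ≥ 2 be a natural number, let A be a finite subset of X with |A| = k, let a and a' be two distinct elements of A, and let b be an element of X with b ∉ A. Set B = (A \ {a}) ∪ {b} and C = (A \ {a'}) ∪ {b}. If D is a finite subset of X with |D| = k satisfying |D ∩ A| = |D ∩ B| = |D ∩ C| = k − 1 and D is distinct from each of A, B and C, then there exists an element c ∈ A with c ≠ a and c ≠ a' such that D = (A \ {c}) ∪ {b}. -/
theorem stmt_1 {X : Type*} [DecidableEq X] (k : ℕ) (hk : 2 ≤ k)
    (A : Finset X) (hA : A.card = k)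
    (a a' : X) (ha : a ∈ A) (ha' : a' ∈ A) (haa' : a ≠ a')
    (b : X) (hb : b ∉ A)
    (B C : Finset X) (hB : B = (A \ {a}) ∪ {b}) (hC : C = (A \ {a'}) ∪ {b})
    (D : Finset X) (hD : D.card = k)
    (hDA : (D ∩ A).card = k - 1) (hDB : (D ∩ B).card = k - 1)
    (hDC : (D ∩ C).card = k - 1)
    (hDneA : D ≠ A) (hDneB : D ≠ B) (hDneC : D ≠ C) :
    ∃ c ∈ A, c ≠ a ∧ c ≠ a' ∧ D = (A \ {c}) ∪ {b} := by
  subst hB hC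
  have hAD1 : (A \ D).card = 1 := by
    have h := Finset.card_inter_add_card_sdiff A D
    rw [Finset.inter_comm] at h
    omega
  have hDA1 : (D \ A).card = 1 := by
    have h := Finset.card_inter_add_card_sdiff D A
    omega
  obtain ⟨c, hc⟩ := Finset.card_eq_one.mp hAD1
  obtain ⟨d, hd⟩ := Finset.card_eq_one.mp hDA1
  have hcAD : c ∈ A ∧ c ∉ D := Finset.mem_sdiff.mp (hc ▸ Finset.mem_singleton_self c)
  have hdDA : d ∈ D ∧ d ∉ A := Finset.mem_sdiff.mp (hd ▸ Finset.mem_singleton_self d)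
  have h1 : ∀ x : X, x ∈ A ∧ x ∉ D ↔ x = c := by
    intro x; rw [← Finset.mem_singleton, ← hc, Finset.mem_sdiff]
  have h2 : ∀ x : X, x ∈ D ∧ x ∉ A ↔ x = d := by
    intro x; rw [← Finset.mem_singleton, ← hd, Finset.mem_sdiff]
  have hDeq : D = (A \ {c}) ∪ {d} := by
    ext x
    have hx1 := h1 x
    have hx2 := h2 x
    simp only [Finset.mem_union, Finset.mem_sdiff, Finset.mem_singleton]
    constructor
    · intro hx
      by_cases hxA : x ∈ A
      · left
        refine ⟨hxA, fun h => ?_⟩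
        exact (h ▸ hcAD.2) hx
      · right; exact hx2.mp ⟨hx, hxA⟩
    · rintro (⟨hxA, hxc⟩ | rfl)
      · by_contra hxD; exact hxc (hx1.mp ⟨hxA, hxD⟩)
      · exact hdDA.1
  -- helper: if b ∉ D and e ∈ A with the card condition, then e = c
  have key : ∀ e : X, e ∈ A → b ∉ D → (D ∩ ((A \ {e}) ∪ {b})).card = k - 1 → e = c := by
    intro e he hbD hcard
    have hset : D ∩ ((A \ {e}) ∪ {b}) = (D ∩ A) \ {e} := by
      ext x
      simp only [Finset.mem_inter, Finset.mem_union, Finset.mem_sdiff, Finset.mem_singleton]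
      constructor
      · rintro ⟨hxD, ⟨hxA, hxe⟩ | rfl⟩
        · exact ⟨⟨hxD, hxA⟩, hxe⟩
        · exact absurd hxD hbD
      · rintro ⟨⟨hxD, hxA⟩, hxe⟩
        exact ⟨hxD, Or.inl ⟨hxA, hxe⟩⟩
    rw [hset] at hcard
    have heD : e ∉ D := by
      by_contra heD
      have hmem : e ∈ D ∩ A := Finset.mem_inter.mpr ⟨heD, he⟩
      have hcard' : ((D ∩ A) \ {e}).card = (D ∩ A).card - 1 := by
        rw [Finset.sdiff_singleton_eq_erase, Finset.card_erase_of_mem hmem]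
      omega
    exact h1 e |>.mp ⟨he, heD⟩
  by_cases hdb : d = b
  · subst hdb
    refine ⟨c, hcAD.1, ?_, ?_, hDeq⟩
    · rintro rfl; exact hDneB hDeq
    · rintro rfl; exact hDneC hDeq
  · exfalso
    have hbD : b ∉ D := by
      intro hbD
      exact hdb ((h2 b).mp ⟨hbD, hb⟩).symm
    have hac : a = c := key a ha hbD hDB
    have ha'c : a' = c := key a' ha' hbD hDC
    exact haa' (hac.trans ha'c.symm)
end

section
/- Let X be a type with decidable equality, let k ≥ 2 be a natural number, let A be a finite subset of X with |A| = k, let a and a' be two distinct elements of A, and let b be an element of X with b ∉ A. Set B = (A \ {a}) ∪ {b} and C = (A \ {a'}) ∪ {b}. If 𝒟 is a finite family of finite subsets of X, each of cardinality k, such that any two distinct members of 𝒟 intersect in exactly k − 1 elements, and A, B, C all belong to 𝒟, then 𝒟 has at most k + 1 members. -/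
theorem stmt_2 {X : Type*} [DecidableEq X] (k : ℕ) (hk : 2 ≤ k)
    (A : Finset X) (hA : A.card = k)
    (a a' : X) (ha : a ∈ A) (ha' : a' ∈ A) (haa' : a ≠ a')
    (b : X) (hb : b ∉ A)
    (B C : Finset X) (hB : B = (A \ {a}) ∪ {b}) (hC : C = (A \ {a'}) ∪ {b})
    (𝒟 : Finset (Finset X))
    (hcard : ∀ D ∈ 𝒟, D.card = k)
    (hint : ∀ D ∈ 𝒟, ∀ E ∈ 𝒟, D ≠ E → (D ∩ E).card = k - 1)
    (hA𝒟 : A ∈ 𝒟) (hB𝒟 : B ∈ 𝒟) (hC𝒟 : C ∈ 𝒟) :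
    𝒟.card ≤ k + 1 := by
  subst hB hC
  have key : ∀ D ∈ 𝒟, D = A ∨ ∃ c ∈ A, D = (A \ {c}) ∪ {b} := by
    intro D hD
    by_cases hDA : D = A
    · exact Or.inl hDA
    right
    have hDk := hcard D hD
    have hIA : (D ∩ A).card = k - 1 := hint D hD A hA𝒟 hDA
    have hiDA : (A ∩ D).card = k - 1 := by rwa [Finset.inter_comm]
    have e1 := Finset.card_sdiff_add_card_inter A D
    have e2 := Finset.card_sdiff_add_card_inter D A
    have hAD : (A \ D).card = 1 := by omega
    have hDAc : (D \ A).card = 1 := by omega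
    obtain ⟨c, hc⟩ := Finset.card_eq_one.mp hAD
    obtain ⟨d, hd⟩ := Finset.card_eq_one.mp hDAc
    have hcA : c ∈ A ∧ c ∉ D := by
      have : c ∈ A \ D := hc ▸ Finset.mem_singleton_self c
      exact Finset.mem_sdiff.mp this
    have hdD : d ∈ D ∧ d ∉ A := by
      have : d ∈ D \ A := hd ▸ Finset.mem_singleton_self d
      exact Finset.mem_sdiff.mp this
    have hAc : A \ {c} = A ∩ D := by
      rw [← hc, Finset.sdiff_sdiff_self_left]
    have hDeq : D = (A \ {c}) ∪ {d} := by
      rw [hAc, Finset.inter_comm, ← hd]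
      ext x; simp only [Finset.mem_union, Finset.mem_inter, Finset.mem_sdiff]; tauto
    by_cases hdb : d = b
    · exact ⟨c, hcA.1, by rw [hDeq, hdb]⟩
    · exfalso
      -- b ∉ D
      have hbD : b ∉ D := by
        rw [hDeq]
        simp only [Finset.mem_union, Finset.mem_sdiff, Finset.mem_singleton]
        push_neg
        exact ⟨fun h => absurd h hb, fun h => hdb h.symm⟩
      have main : ∀ e ∈ A, ((A \ {e}) ∪ {b}) ∈ 𝒟 → c = e := by
        intro e he hE
        have hDE : D ≠ (A \ {e}) ∪ {b} := by
          intro h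
          apply hbD
          rw [h]
          simp
        have hI := hint D hD _ hE hDE
        have hcomp : D ∩ ((A \ {e}) ∪ {b}) = (A \ {c}) \ {e} := by
          rw [hDeq]
          ext x
          simp only [Finset.mem_inter, Finset.mem_union, Finset.mem_sdiff,
            Finset.mem_singleton]
          constructor
          · rintro ⟨h1 | h1, h2 | h2⟩
            · exact ⟨⟨h1.1, h1.2⟩, h2.2⟩
            · exact absurd h2 (by rintro rfl; exact hb h1.1)
            · subst h1; exact absurd h2.1 hdD.2
            · exact absurd h2 (by rintro h; exact hdb (h1 ▸ h))
          · rintro ⟨⟨h1, h2⟩, h3⟩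
            exact ⟨Or.inl ⟨h1, h2⟩, Or.inl ⟨h1, h3⟩⟩
        by_contra hce
        have hsub : {c, e} ⊆ A := by
          intro x hx
          simp only [Finset.mem_insert, Finset.mem_singleton] at hx
          rcases hx with rfl | rfl
          exacts [hcA.1, he]
        have hce' : e ∈ A \ {c} := Finset.mem_sdiff.mpr ⟨he, by simp [Ne.symm hce]⟩
        have : ((A \ {c}) \ {e}).card = k - 2 := by
          rw [Finset.card_sdiff_of_subset (Finset.singleton_subset_iff.mpr hce'),
            Finset.card_sdiff_of_subset (Finset.singleton_subset_iff.mpr hcA.1)]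
          simp only [Finset.card_singleton, hA]
          omega
        rw [hcomp, this] at hI
        omega
      have h1 : c = a := main a ha hB𝒟
      have h2 : c = a' := main a' ha' hC𝒟
      exact haa' (h1 ▸ h2)
  have hsub : 𝒟 ⊆ insert A (A.image fun c => (A \ {c}) ∪ {b}) := by
    intro D hD
    rcases key D hD with rfl | ⟨c, hc, rfl⟩
    · exact Finset.mem_insert_self _ _
    · exact Finset.mem_insert_of_mem (Finset.mem_image_of_mem _ hc)
  calc 𝒟.card ≤ _ := Finset.card_le_card hsub
    _ ≤ (A.image fun c => (A \ {c}) ∪ {b}).card + 1 := Finset.card_insert_le _ _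
    _ ≤ A.card + 1 := by gcongr; exact Finset.card_image_le
    _ = k + 1 := by rw [hA]
end
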